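/- arXiv:1807.04803 — 3 statements merged into one kernel-verified Lean document; each statement's English description precedes it below -/
import Mathlib

section
/- For all reals ε and p with 0 < ε < p² ≤ 1 there exists n₀ = n₀(ε,p) such that the following holds. Let G be a bipartite graph with bipartition (X,Y), |X| = |Y| = n, where 2n > n₀ and every edge of G joins X to Y, and suppose the pair (X,Y) is ε-regular with density p. Then (1−3√ε)·n·log(pn) ≤ log NM(G,√ε) ≤ (1+3√ε)·n·log(pn). -/
/-!
By regularity, as long as fewer than `t = ⌈(1 - √ε) n⌉` disjoint edges have been chosen, the
unused parts of `X` and `Y` (of size `n - k ≥ εn`) still span at least `(p - ε)(n - k)²` edges, so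
there are at least `∏_{k<t} (p - ε)(n - k)²` ordered sequences of `t` disjoint edges. Each of them
extends to a maximal matching covering `2t ≥ (1 - √ε)|V|` vertices, and a matching with at most
`n` edges contains at most `n(n-1)⋯(n-t+1)` of them, so `NM ≥ ((p - ε)(n - t))^t` with
`n - t ≈ √ε n`. Conversely a matching is determined by the partner (or absence of one) of each
vertex of `X`, so `NM ≤ (n + 1)^n`. Both bounds are `(1 ± O(√ε)) n log(pn)` as soon as `log(pn)`
exceeds a constant depending only on `ε` and `p`.
-/

open Finset

/-- `M` (a finset of edges) is a matching of `G`: every element is an edge of `G` and distinct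
elements of `M` share no endpoint. -/
def IsMatchingFinset {V : Type*} (G : SimpleGraph V) (M : Finset (Sym2 V)) : Prop :=
  (∀ e ∈ M, e ∈ G.edgeSet) ∧
    ∀ e ∈ M, ∀ f ∈ M, e ≠ f → ∀ v : V, ¬(v ∈ e ∧ v ∈ f)

/-- `M` is a maximal matching of `G`: every edge of `G` shares an endpoint with some edge
of `M`. -/
def IsMaximalMatchingFinset {V : Type*} (G : SimpleGraph V) (M : Finset (Sym2 V)) : Prop :=
  IsMatchingFinset G M ∧ ∀ e ∈ G.edgeSet, ∃ f ∈ M, ∃ v : V, v ∈ e ∧ v ∈ f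

/-- The number of vertices covered by the edges in `M`. -/
noncomputable def coveredCard {V : Type*} (M : Finset (Sym2 V)) : ℕ :=
  Set.ncard {v : V | ∃ e ∈ M, v ∈ e}

/-- `NM G ε` is the number of maximal `ε`-near perfect matchings of `G`, i.e. maximal matchings
covering at least `(1-ε)|V(G)|` vertices. -/
noncomputable def NM (V : Type*) [Fintype V] (G : SimpleGraph V) (ε : ℝ) : ℕ :=
  Nat.card {M : Finset (Sym2 V) // IsMaximalMatchingFinset G M ∧
    (1 - ε) * (Fintype.card V : ℝ) ≤ (coveredCard M : ℝ)}

open Filter Real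

variable {V : Type*} {G : SimpleGraph V}

namespace IsMatchingFinset

variable {M : Finset (Sym2 V)}

lemma eq_of_mem_of_mem (hM : IsMatchingFinset G M) {e f : Sym2 V} (he : e ∈ M) (hf : f ∈ M)
    {v : V} (hve : v ∈ e) (hvf : v ∈ f) : e = f :=
  not_not.1 fun hne => hM.2 e he f hf hne v ⟨hve, hvf⟩

lemma eq_of_mk_mem_of_mk_mem (hM : IsMatchingFinset G M) {x y y' : V} (h : s(x, y) ∈ M)
    (h' : s(x, y') ∈ M) : y = y' :=
  Sym2.congr_right.1 (hM.eq_of_mem_of_mem h h' (Sym2.mem_mk_left x y) (Sym2.mem_mk_left x y'))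

lemma insert [DecidableEq V] (hM : IsMatchingFinset G M) {e : Sym2 V} (he : e ∈ G.edgeSet)
    (hdisj : ∀ f ∈ M, ∀ v ∈ e, v ∉ f) : IsMatchingFinset G (insert e M) := by
  refine ⟨fun f hf => ?_, fun f hf g hg hfg v hv => ?_⟩
  · rcases mem_insert.1 hf with rfl | hf
    exacts [he, hM.1 f hf]
  · rcases mem_insert.1 hf with rfl | hfM <;> rcases mem_insert.1 hg with rfl | hgM
    · exact hfg rfl
    · exact hdisj g hgM v hv.1 hv.2
    · exact hdisj f hfM v hv.2 hv.1
    · exact hM.2 f hfM g hgM hfg v hv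

lemma exists_maximal_superset [Finite V] [DecidableEq V] (hM : IsMatchingFinset G M) :
    ∃ M', IsMaximalMatchingFinset G M' ∧ M ⊆ M' := by
  obtain ⟨M', hMM', hmax⟩ := Finite.exists_le_maximal hM
  refine ⟨M', ⟨hmax.prop, fun e he => ?_⟩, hMM'⟩
  by_contra! hdisj
  have heM' : e ∈ M' :=
    hmax.2 (hmax.prop.insert he hdisj) (subset_insert e M') (mem_insert_self e M')
  exact hdisj e heM' _ e.out_fst_mem e.out_fst_mem

lemma card_le (hM : IsMatchingFinset G M) {X : Finset V} (hX : ∀ e ∈ G.edgeSet, ∃ v ∈ X, v ∈ e) :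
    #M ≤ #X :=
  card_le_card_of_forall_subsingleton (fun e v => v ∈ e) (fun e he => hX e (hM.1 e he))
    fun _ _ _ he _ hf => hM.eq_of_mem_of_mem he.1 hf.1 he.2 hf.2

end IsMatchingFinset

section Bipartite

variable {X Y : Finset V}

lemma exists_eq_mk_of_mem_edgeSet
    (hadj : ∀ u v : V, G.Adj u v → (u ∈ X ∧ v ∈ Y) ∨ (u ∈ Y ∧ v ∈ X)) {e : Sym2 V}
    (he : e ∈ G.edgeSet) : ∃ x ∈ X, ∃ y ∈ Y, e = s(x, y) := by
  induction e using Sym2.inductionOn with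
  | hf u v =>
    rcases hadj u v he with ⟨hu, hv⟩ | ⟨hu, hv⟩
    · exact ⟨u, hu, v, hv, rfl⟩
    · exact ⟨v, hv, u, hu, Sym2.eq_swap⟩

open Classical in
noncomputable def partner (M : Finset (Sym2 V)) (Y : Finset V) (x : V) : Option Y :=
  if h : ∃ y : Y, s(x, ↑y) ∈ M then some h.choose else none

lemma IsMatchingFinset.partner_eq_some_iff {M : Finset (Sym2 V)} (hM : IsMatchingFinset G M)
    {x : V} {y : Y} : partner M Y x = some y ↔ s(x, ↑y) ∈ M := by
  unfold partner
  split_ifs with h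
  · rw [Option.some_inj]
    exact ⟨fun hy => hy ▸ h.choose_spec,
      fun hy => Subtype.ext (hM.eq_of_mk_mem_of_mk_mem h.choose_spec hy)⟩
  · simp only [false_iff]
    exact fun hy => h ⟨y, hy⟩

lemma card_matchings_le (hadj : ∀ u v : V, G.Adj u v → (u ∈ X ∧ v ∈ Y) ∨ (u ∈ Y ∧ v ∈ X)) :
    Nat.card {M // IsMatchingFinset G M} ≤ (#Y + 1) ^ #X := by
  let code (M : {M // IsMatchingFinset G M}) (x : X) : Option Y := partner M.1 Y x
  have hsub : ∀ M M', code M = code M' → M.1 ⊆ M'.1 := by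
    intro M M' h e he
    obtain ⟨x, hx, y, hy, rfl⟩ := exists_eq_mk_of_mem_edgeSet hadj (M.2.1 e he)
    have hxy : code M ⟨x, hx⟩ = some ⟨y, hy⟩ := M.2.partner_eq_some_iff.2 he
    exact M'.2.partner_eq_some_iff.1 (h ▸ hxy)
  calc Nat.card {M // IsMatchingFinset G M} ≤ Nat.card (X → Option Y) :=
        Nat.card_le_card_of_injective code fun M M' h =>
          Subtype.ext ((hsub M M' h).antisymm (hsub M' M h.symm))
    _ = (#Y + 1) ^ #X := by
        rw [Nat.card_fun, Finite.card_option, Nat.card_eq_finsetCard, Nat.card_eq_finsetCard]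

lemma NM_le_card_matchings [Fintype V] (δ : ℝ) :
    NM V G δ ≤ Nat.card {M // IsMatchingFinset G M} :=
  Nat.card_le_card_of_injective (fun M => ⟨M.1, M.2.1.1⟩) fun _ _ h =>
    Subtype.ext (Subtype.mk.inj h)

lemma eq_of_sym2_mk_eq (hXY : Disjoint X Y) {e e' : V × V} (he : e.1 ∈ X) (he' : e'.2 ∈ Y)
    (h : s(e.1, e.2) = s(e'.1, e'.2)) : e = e' :=
  (Sym2.mk_eq_mk_iff.1 h).resolve_right fun hs =>
    disjoint_left.1 hXY he (congrArg Prod.fst hs ▸ he')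

end Bipartite

section MatchingSeqs

variable [Fintype V] [DecidableEq V] [DecidableRel G.Adj] {X Y : Finset V}

variable (G X Y) in
def matchingSeqs (k : ℕ) : Finset (Fin k → V × V) :=
  {s | (∀ i, s i ∈ G.interedges X Y) ∧ (Prod.fst ∘ s).Injective ∧ (Prod.snd ∘ s).Injective}

lemma mem_matchingSeqs {k : ℕ} {s : Fin k → V × V} :
    s ∈ matchingSeqs G X Y k ↔
      (∀ i, s i ∈ G.interedges X Y) ∧ (Prod.fst ∘ s).Injective ∧ (Prod.snd ∘ s).Injective := by
  simp [matchingSeqs]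

variable {k : ℕ} {s : Fin k → V × V}

lemma image_fst_subset (hs : s ∈ matchingSeqs G X Y k) : univ.image (Prod.fst ∘ s) ⊆ X :=
  image_subset_iff.2 fun i _ => (G.mem_interedges_iff.1 ((mem_matchingSeqs.1 hs).1 i)).1

lemma image_snd_subset (hs : s ∈ matchingSeqs G X Y k) : univ.image (Prod.snd ∘ s) ⊆ Y :=
  image_subset_iff.2 fun i _ => (G.mem_interedges_iff.1 ((mem_matchingSeqs.1 hs).1 i)).2.1

lemma card_image_fst (hs : s ∈ matchingSeqs G X Y k) : #(univ.image (Prod.fst ∘ s)) = k := by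
  rw [card_image_of_injective _ (mem_matchingSeqs.1 hs).2.1, card_univ, Fintype.card_fin]

lemma card_image_snd (hs : s ∈ matchingSeqs G X Y k) : #(univ.image (Prod.snd ∘ s)) = k := by
  rw [card_image_of_injective _ (mem_matchingSeqs.1 hs).2.2, card_univ, Fintype.card_fin]

lemma snoc_mem_matchingSeqs (hs : s ∈ matchingSeqs G X Y k) {e : V × V}
    (he : e ∈ G.interedges (X \ univ.image (Prod.fst ∘ s)) (Y \ univ.image (Prod.snd ∘ s))) :
    (Fin.snoc s e : Fin (k + 1) → V × V) ∈ matchingSeqs G X Y (k + 1) := by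
  obtain ⟨hedge, hfst, hsnd⟩ := mem_matchingSeqs.1 hs
  obtain ⟨he₁, he₂, hadj⟩ := G.mem_interedges_iff.1 he
  simp only [Finset.mem_sdiff, Finset.mem_image] at he₁ he₂
  refine mem_matchingSeqs.2 ⟨fun i => ?_, ?_, ?_⟩
  · refine Fin.lastCases ?_ (fun i => ?_) i
    · simpa [G.mem_interedges_iff] using ⟨he₁.1, he₂.1, hadj⟩
    · simpa using hedge i
  · rw [Fin.comp_snoc, Fin.snoc_injective_iff]
    exact ⟨hfst, by simpa using he₁.2⟩
  · rw [Fin.comp_snoc, Fin.snoc_injective_iff]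
    exact ⟨hsnd, by simpa using he₂.2⟩

lemma card_matchingSeqs_mul_le {m : ℝ}
    (hm : ∀ X' ⊆ X, ∀ Y' ⊆ Y, #X' + k = #X → #Y' + k = #Y → m ≤ #(G.interedges X' Y')) :
    #(matchingSeqs G X Y k) * m ≤ #(matchingSeqs G X Y (k + 1)) := by
  -- double count the pairs (s, s') with `s = Fin.init s'`: each `s` has an extension by every
  -- edge between the unused parts of `X` and `Y`, and each `s'` restricts to a single `s`
  have key := card_nsmul_le_card_nsmul (fun s (s' : Fin (k + 1) → V × V) => Fin.init s' = s)
    (s := matchingSeqs G X Y k) (t := matchingSeqs G X Y (k + 1)) (m := m) (n := (1 : ℝ)) ?_ ?_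
  · simpa using key
  · intro s hs
    refine (hm (X \ univ.image (Prod.fst ∘ s)) sdiff_subset (Y \ univ.image (Prod.snd ∘ s))
      sdiff_subset ?_ ?_).trans ?_
    · simpa only [card_image_fst hs] using card_sdiff_add_card_eq_card (image_fst_subset hs)
    · simpa only [card_image_snd hs] using card_sdiff_add_card_eq_card (image_snd_subset hs)
    · refine Nat.cast_le.2 (card_le_card_of_injOn (fun e => Fin.snoc s e) (fun e he => ?_)
        fun e _ e' _ h => by simpa using congrFun h (Fin.last k))
      rw [mem_coe, mem_bipartiteAbove]
      exact ⟨snoc_mem_matchingSeqs hs he, Fin.init_snoc _ _⟩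
  · intro s' _
    refine Nat.cast_le_one.2 (card_le_one.2 fun s₁ h₁ s₂ h₂ => ?_)
    rw [mem_bipartiteBelow] at h₁ h₂
    exact h₁.2.symm.trans h₂.2

lemma prod_le_card_matchingSeqs {t : ℕ} {m : ℕ → ℝ} (hm0 : ∀ k, 0 ≤ m k)
    (hm : ∀ k < t, ∀ X' ⊆ X, ∀ Y' ⊆ Y, #X' + k = #X → #Y' + k = #Y →
      m k ≤ #(G.interedges X' Y')) :
    ∏ k ∈ range t, m k ≤ #(matchingSeqs G X Y t) := by
  induction t with
  | zero =>
    have h : (Fin.elim0 : Fin 0 → V × V) ∈ matchingSeqs G X Y 0 :=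
      mem_matchingSeqs.2 ⟨fun i => i.elim0, Function.injective_of_subsingleton _,
        Function.injective_of_subsingleton _⟩
    simpa using card_pos.2 ⟨_, h⟩
  | succ t ih =>
    rw [prod_range_succ]
    calc (∏ k ∈ range t, m k) * m t ≤ #(matchingSeqs G X Y t) * m t := by
          gcongr
          · exact hm0 t
          · exact ih fun k hk => hm k (by omega)
      _ ≤ #(matchingSeqs G X Y (t + 1)) := card_matchingSeqs_mul_le (hm t t.lt_succ_self)

lemma isMatchingFinset_image_mk (hXY : Disjoint X Y) (hs : s ∈ matchingSeqs G X Y k) :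
    IsMatchingFinset G (univ.image fun i => s((s i).1, (s i).2)) := by
  obtain ⟨hedge, hfst, hsnd⟩ := mem_matchingSeqs.1 hs
  refine ⟨?_, ?_⟩
  · simp only [Finset.mem_image]
    rintro _ ⟨i, -, rfl⟩
    exact (G.mem_interedges_iff.1 (hedge i)).2.2
  · simp only [Finset.mem_image]
    rintro _ ⟨i, -, rfl⟩ _ ⟨j, -, rfl⟩ hne v ⟨hvi, hvj⟩
    have hij : i ≠ j := fun h => hne (h ▸ rfl)
    obtain ⟨hi₁, hi₂, -⟩ := G.mem_interedges_iff.1 (hedge i)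
    obtain ⟨hj₁, hj₂, -⟩ := G.mem_interedges_iff.1 (hedge j)
    rcases Sym2.mem_iff.1 hvi with rfl | rfl <;> rcases Sym2.mem_iff.1 hvj with h | h
    · exact hij (hfst h)
    · exact disjoint_left.1 hXY hi₁ (h ▸ hj₂)
    · exact disjoint_left.1 hXY hj₁ (h ▸ hi₂)
    · exact hij (hsnd h)

lemma card_filter_forall_mem_le (hXY : Disjoint X Y) (t : ℕ) (M : Finset (Sym2 V)) :
    #{s ∈ matchingSeqs G X Y t | ∀ i, s((s i).1, (s i).2) ∈ M} ≤ (#M).descFactorial t := by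
  set S := {s ∈ matchingSeqs G X Y t | ∀ i, s((s i).1, (s i).2) ∈ M}
  have hS : ∀ s ∈ S, s ∈ matchingSeqs G X Y t ∧ ∀ i, s((s i).1, (s i).2) ∈ M :=
    fun s hs => mem_filter.1 hs
  have hmk_eq {s : Fin t → V × V} (hs : s ∈ matchingSeqs G X Y t) {s' : Fin t → V × V}
      (hs' : s' ∈ matchingSeqs G X Y t) {i j : Fin t}
      (h : s((s i).1, (s i).2) = s((s' j).1, (s' j).2)) : s i = s' j :=
    eq_of_sym2_mk_eq hXY (G.mem_interedges_iff.1 ((mem_matchingSeqs.1 hs).1 i)).1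
      (G.mem_interedges_iff.1 ((mem_matchingSeqs.1 hs').1 j)).2.1 h
  let code (s : S) : Fin t ↪ M :=
    ⟨fun i => ⟨s((s.1 i).1, (s.1 i).2), (hS s.1 s.2).2 i⟩, fun i j h =>
      (mem_matchingSeqs.1 (hS s.1 s.2).1).2.1
        (congrArg Prod.fst (hmk_eq (hS s.1 s.2).1 (hS s.1 s.2).1 (congrArg Subtype.val h)))⟩
  have hcode : code.Injective := fun s s' h => Subtype.ext <| funext fun i =>
    hmk_eq (hS s.1 s.2).1 (hS s'.1 s'.2).1 (congrArg Subtype.val (DFunLike.congr_fun h i))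
  calc #S = Fintype.card S := (Fintype.card_coe S).symm
    _ ≤ Fintype.card (Fin t ↪ M) := Fintype.card_le_of_injective code hcode
    _ = (#M).descFactorial t := by
        rw [Fintype.card_embedding_eq, Fintype.card_coe, Fintype.card_fin]

lemma two_mul_le_coveredCard (hXY : Disjoint X Y) (hs : s ∈ matchingSeqs G X Y k)
    {M : Finset (Sym2 V)} (hM : ∀ i, s((s i).1, (s i).2) ∈ M) : 2 * k ≤ coveredCard M := by
  set A := univ.image (Prod.fst ∘ s)
  set B := univ.image (Prod.snd ∘ s)
  have hAB : Disjoint A B := hXY.mono (image_fst_subset hs) (image_snd_subset hs)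
  have hcov : ((A ∪ B : Finset V) : Set V) ⊆ {v | ∃ e ∈ M, v ∈ e} := by
    intro v hv
    simp only [coe_union, coe_image, coe_univ, Set.image_univ, Set.mem_union,
      Set.mem_range, Function.comp_apply, A, B] at hv
    rcases hv with ⟨i, rfl⟩ | ⟨i, rfl⟩
    exacts [⟨_, hM i, Sym2.mem_mk_left _ _⟩, ⟨_, hM i, Sym2.mem_mk_right _ _⟩]
  calc 2 * k = #(A ∪ B) := by
        rw [card_union_of_disjoint hAB, card_image_fst hs, card_image_snd hs, two_mul]
    _ = ((A ∪ B : Finset V) : Set V).ncard := (Set.ncard_coe_finset _).symm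
    _ ≤ coveredCard M := Set.ncard_le_ncard hcov (Set.toFinite _)

lemma card_matchingSeqs_le_mul_NM (hXY : Disjoint X Y)
    (hadj : ∀ u v : V, G.Adj u v → (u ∈ X ∧ v ∈ Y) ∨ (u ∈ Y ∧ v ∈ X)) {t : ℕ} {δ : ℝ}
    (hcov : (1 - δ) * Fintype.card V ≤ 2 * t) :
    #(matchingSeqs G X Y t) ≤ (#X).descFactorial t * NM V G δ := by
  classical
  let T := {M // IsMaximalMatchingFinset G M ∧ (1 - δ) * Fintype.card V ≤ coveredCard M}
  let S (M : T) := {s ∈ matchingSeqs G X Y t | ∀ i, s((s i).1, (s i).2) ∈ M.1}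
  have hS : matchingSeqs G X Y t ⊆ univ.biUnion S := by
    intro s hs
    obtain ⟨M, hM, hsM⟩ := (isMatchingFinset_image_mk hXY hs).exists_maximal_superset
    have hsM' : ∀ i, s((s i).1, (s i).2) ∈ M := fun i => hsM (mem_image_of_mem _ (mem_univ i))
    have hMcov : (2 * t : ℝ) ≤ coveredCard M := by
      exact_mod_cast two_mul_le_coveredCard hXY hs hsM'
    exact mem_biUnion.2 ⟨⟨M, hM, hcov.trans hMcov⟩, mem_univ _, mem_filter.2 ⟨hs, hsM'⟩⟩
  have hX : ∀ e ∈ G.edgeSet, ∃ v ∈ X, v ∈ e := fun e he => by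
    obtain ⟨x, hx, y, -, rfl⟩ := exists_eq_mk_of_mem_edgeSet hadj he
    exact ⟨x, hx, Sym2.mem_mk_left x y⟩
  calc #(matchingSeqs G X Y t) ≤ ∑ M : T, #(S M) := (card_le_card hS).trans card_biUnion_le
    _ ≤ ∑ _M : T, (#X).descFactorial t := sum_le_sum fun M _ =>
        (card_filter_forall_mem_le hXY t M.1).trans
          (Nat.descFactorial_le t (M.2.1.1.card_le hX))
    _ = (#X).descFactorial t * NM V G δ := by
        rw [sum_const, card_univ, smul_eq_mul, mul_comm, NM, Nat.card_eq_fintype_card]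

end MatchingSeqs

lemma pow_le_NM [Fintype V] [DecidableEq V] [DecidableRel G.Adj] {X Y : Finset V}
    (hXY : Disjoint X Y) (hadj : ∀ u v : V, G.Adj u v → (u ∈ X ∧ v ∈ Y) ∨ (u ∈ Y ∧ v ∈ X))
    {n t : ℕ} (hX : #X = n) (hY : #Y = n) (htn : t ≤ n) {c δ : ℝ} (hc : 0 ≤ c)
    (hcov : (1 - δ) * Fintype.card V ≤ 2 * t)
    (hdense : ∀ X' ⊆ X, ∀ Y' ⊆ Y, #X' = #Y' → n - t < #X' →
      c * #X' * #Y' ≤ #(G.interedges X' Y')) :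
    (c * (n - t : ℕ)) ^ t ≤ NM V G δ := by
  set D := n.descFactorial t
  have hD : (0 : ℝ) < D := Nat.cast_pos.2 (Nat.descFactorial_pos.2 htn)
  have hseq : c ^ t * D ^ 2 ≤ #(matchingSeqs G X Y t) := by
    have h := prod_le_card_matchingSeqs (G := G) (X := X) (Y := Y) (t := t)
      (m := fun k => c * ((n - k : ℕ) : ℝ) ^ 2) (fun k => by positivity)
      fun k hk X' hX' Y' hY' hXk hYk => by
        have hX'n : #X' = n - k := by omega
        have hY'n : #Y' = n - k := by omega
        simpa only [hX'n, hY'n, sq, mul_assoc] using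
          hdense X' hX' Y' hY' (hX'n.trans hY'n.symm) (by omega)
    rwa [prod_mul_distrib, prod_const, card_range, prod_pow, ← Nat.cast_prod,
      ← Nat.descFactorial_eq_prod_range] at h
  have hNM : c ^ t * D ≤ NM V G δ := by
    refine le_of_mul_le_mul_left ?_ hD
    calc D * (c ^ t * D) = c ^ t * D ^ 2 := by ring
      _ ≤ #(matchingSeqs G X Y t) := hseq
      _ ≤ D * NM V G δ := by
          exact_mod_cast hX ▸ card_matchingSeqs_le_mul_NM hXY hadj hcov
  have hpow : (((n - t : ℕ) : ℝ)) ^ t ≤ D := by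
    exact_mod_cast (Nat.pow_le_pow_left (by omega) t).trans (Nat.pow_sub_le_descFactorial n t)
  calc (c * (n - t : ℕ)) ^ t = c ^ t * ((n - t : ℕ) : ℝ) ^ t := mul_pow _ _ _
    _ ≤ c ^ t * D := by gcongr
    _ ≤ NM V G δ := hNM

lemma SimpleGraph.sub_mul_card_mul_card_le_card_interedges [DecidableRel G.Adj]
    {s t : Finset V} {p ε : ℝ} (h : |((G.edgeDensity s t : ℚ) : ℝ) - p| ≤ ε) :
    (p - ε) * #s * #t ≤ #(G.interedges s t) := by
  have hd : p - ε ≤ (G.edgeDensity s t : ℝ) := by linarith [(abs_le.1 h).1]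
  rcases (#s * #t).eq_zero_or_pos with h0 | hpos
  · have h0' : (#s : ℝ) * #t = 0 := by exact_mod_cast h0
    rw [mul_assoc, h0', mul_zero]
    positivity
  · have hpos' : (0 : ℝ) < #s * #t := by exact_mod_cast hpos
    calc (p - ε) * #s * #t = (p - ε) * (#s * #t) := mul_assoc _ _ _
      _ ≤ G.edgeDensity s t * (#s * #t) := by gcongr
      _ = #(G.interedges s t) := by
          rw [SimpleGraph.edgeDensity_def]
          push_cast
          exact div_mul_cancel₀ _ hpos'.ne'

lemma eventually_mul_log_succ_le {p c : ℝ} (hp : 0 < p) (hc : 0 < c) :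
    ∀ᶠ n : ℕ in atTop, (n : ℝ) * log (n + 1) ≤ (1 + c) * n * log (p * n) := by
  have hlog : Tendsto (fun n : ℕ => log (p * n)) atTop atTop :=
    tendsto_log_atTop.comp (tendsto_natCast_atTop_atTop.const_mul_atTop hp)
  filter_upwards [hlog.eventually_ge_atTop (log (2 / p) / c), eventually_ge_atTop 1]
    with n hL hn
  have hn' : (1 : ℝ) ≤ n := by exact_mod_cast hn
  have hL' : log (2 / p) ≤ c * log (p * n) := (div_le_iff₀' hc).1 hL
  calc (n : ℝ) * log (n + 1) ≤ n * log (2 / p * (p * n)) := by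
        gcongr
        field_simp
        linarith
    _ = n * (log (2 / p) + log (p * n)) := by rw [log_mul (by positivity) (by positivity)]
    _ ≤ (1 + c) * n * log (p * n) := by nlinarith

lemma eventually_mul_log_le_mul_log {ε q p : ℝ} (hε : 0 < ε) (hεq : ε < q) (hqp : q < p)
    (hp : p ≤ 1) :
    ∀ᶠ n : ℕ in atTop, ∀ t : ℕ, (1 - q) * n ≤ t → (t : ℝ) < (1 - q) * n + 1 →
      ε * n ≤ n - t ∧ (1 - 3 * q) * n * log (p * n) ≤ t * log ((p - ε) * (n - t)) := by
  have hq : 0 < q := hε.trans hεq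
  have hp0 : 0 < p := hq.trans hqp
  have hpε : 0 < p - ε := by linarith
  set a := (p - ε) * q / (2 * p)
  have ha : 0 < a := by positivity
  have hloga : log a < 0 := by
    refine log_neg ha ((div_lt_one (by linarith)).2 ?_)
    nlinarith
  have hlog : Tendsto (fun n : ℕ => log (p * n)) atTop atTop :=
    tendsto_log_atTop.comp (tendsto_natCast_atTop_atTop.const_mul_atTop hp0)
  filter_upwards [hlog.eventually_ge_atTop (-log a / (2 * q)), hlog.eventually_ge_atTop (-log a),
    tendsto_natCast_atTop_atTop.eventually_ge_atTop (2 / q),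
    tendsto_natCast_atTop_atTop.eventually_ge_atTop (1 / (q - ε))]
    with n hL₁ hL₂ hn₁ hn₂ t ht₁ ht₂
  have hqn : 2 ≤ q * n := by rwa [div_le_iff₀' (by linarith)] at hn₁
  have hqεn : 1 ≤ (q - ε) * n := by rwa [div_le_iff₀' (by linarith)] at hn₂
  have hn : (0 : ℝ) < n := by nlinarith
  have hnt : q * n / 2 ≤ n - t := by linarith
  refine ⟨by linarith, ?_⟩
  have hL : 0 ≤ 2 * q * log (p * n) + log a := by
    have := (div_le_iff₀' (by positivity : (0 : ℝ) < 2 * q)).1 hL₁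
    linarith
  have hbase : log (p * n) + log a ≤ log ((p - ε) * (n - t)) := by
    have hpn : 0 < p * n := by positivity
    rw [← log_mul hpn.ne' ha.ne']
    refine log_le_log (by positivity) ?_
    calc p * n * a = (p - ε) * (q * n / 2) := by simp only [a]; field_simp
      _ ≤ (p - ε) * (n - t) := by gcongr
  have hn0 : (0 : ℝ) ≤ n := n.cast_nonneg
  calc (1 - 3 * q) * n * log (p * n) ≤ (1 - q) * n * (log (p * n) + log a) := by
        nlinarith [mul_nonneg hn0 hL, mul_nonneg (mul_nonneg hn0 hq.le) (neg_nonneg.2 hloga.le)]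
    _ ≤ t * (log (p * n) + log a) := by gcongr; linarith
    _ ≤ t * log ((p - ε) * (n - t)) := by gcongr

lemma sub_mul_pow_le_NM_of_regular [Fintype V] [DecidableEq V] [DecidableRel G.Adj]
    {X Y : Finset V} {n t : ℕ} {ε p δ : ℝ} (hX : #X = n) (hY : #Y = n) (hXY : Disjoint X Y)
    (hcover : ∀ v : V, v ∈ X ∨ v ∈ Y)
    (hadj : ∀ u v : V, G.Adj u v → (u ∈ X ∧ v ∈ Y) ∨ (u ∈ Y ∧ v ∈ X))
    (hreg : ∀ X' ⊆ X, ∀ Y' ⊆ Y, ε * #X ≤ #X' → ε * #Y ≤ #Y' →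
      |((G.edgeDensity X' Y' : ℚ) : ℝ) - p| ≤ ε)
    (hε : 0 ≤ ε) (hεp : ε ≤ p) (hcov : (1 - δ) * n ≤ t) (hεnt : ε * n ≤ n - t) :
    ((p - ε) * (n - t)) ^ t ≤ NM V G δ := by
  have htn : t ≤ n := by exact_mod_cast (by nlinarith [n.cast_nonneg (α := ℝ)] : (t : ℝ) ≤ n)
  have hV : (Fintype.card V : ℝ) = 2 * n := by
    rw [← card_univ, ← (eq_univ_of_forall fun v => mem_union.2 (hcover v) : X ∪ Y = univ),
      card_union_of_disjoint hXY, hX, hY]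
    push_cast
    ring
  have hdense : ∀ X' ⊆ X, ∀ Y' ⊆ Y, #X' = #Y' → n - t < #X' →
      (p - ε) * #X' * #Y' ≤ #(G.interedges X' Y') := by
    intro X' hX' Y' hY' hXY' hlt
    have hlt' : ((n - t : ℕ) : ℝ) < #X' := by exact_mod_cast hlt
    rw [Nat.cast_sub htn] at hlt'
    exact G.sub_mul_card_mul_card_le_card_interedges
      (hreg X' hX' Y' hY' (by rw [hX]; linarith) (by rw [hY, ← hXY']; linarith))
  simpa only [Nat.cast_sub htn] using
    pow_le_NM hXY hadj hX hY htn (sub_nonneg.2 hεp) (by rw [hV]; linarith) hdense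

lemma log_NM_le [Fintype V] {X Y : Finset V} {n : ℕ} (hX : #X = n) (hY : #Y = n)
    (hadj : ∀ u v : V, G.Adj u v → (u ∈ X ∧ v ∈ Y) ∨ (u ∈ Y ∧ v ∈ X)) (δ : ℝ) :
    log (NM V G δ) ≤ n * log (n + 1) := by
  have hcount : (NM V G δ : ℝ) ≤ (n + 1) ^ n := by
    exact_mod_cast hX ▸ hY ▸ (NM_le_card_matchings δ).trans (card_matchings_le hadj)
  rcases (NM V G δ).eq_zero_or_pos with h0 | hpos
  · rw [h0, Nat.cast_zero, log_zero]
    exact mul_nonneg n.cast_nonneg (log_nonneg (by linarith [n.cast_nonneg (α := ℝ)]))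
  · calc log (NM V G δ) ≤ log ((n + 1) ^ n) := log_le_log (by exact_mod_cast hpos) hcount
      _ = n * log (n + 1) := log_pow _ _

lemma pos_of_abs_sub_le_of_lt_sq {d p ε : ℝ} (hd : 0 ≤ d) (h : |d - p| ≤ ε) (hεp : ε < p ^ 2)
    (hε1 : ε < 1) : 0 < p := by
  by_contra! hp
  nlinarith [abs_le.1 h]

/-- For all `0 < ε < p² ≤ 1` there is `n₀` such that for every bipartite
`ε`-regular graph `G` with density `p` and parts of size `n`, where `2n > n₀`,
`(1-3√ε)·n·log(pn) ≤ log NM(G,√ε) ≤ (1+3√ε)·n·log(pn)`. -/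
theorem count_near_perfect_matchings_bipartite_regular :
    ∀ ε p : ℝ, 0 < ε → ε < p ^ 2 → p ^ 2 ≤ 1 →
    ∃ n₀ : ℕ, ∀ (V : Type) [Fintype V] [DecidableEq V]
      (G : SimpleGraph V) [DecidableRel G.Adj],
      ∀ (X Y : Finset V) (n : ℕ),
      2 * n > n₀ →
      X.card = n → Y.card = n → Disjoint X Y →
      (∀ v : V, v ∈ X ∨ v ∈ Y) →
      (∀ u v : V, G.Adj u v → (u ∈ X ∧ v ∈ Y) ∨ (u ∈ Y ∧ v ∈ X)) →
      (∀ X' ⊆ X, ∀ Y' ⊆ Y,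
        ε * (X.card : ℝ) ≤ (X'.card : ℝ) → ε * (Y.card : ℝ) ≤ (Y'.card : ℝ) →
        |((G.edgeDensity X' Y' : ℚ) : ℝ) - p| ≤ ε) →
      (1 - 3 * Real.sqrt ε) * (n : ℝ) * Real.log (p * n) ≤
          Real.log (NM V G (Real.sqrt ε)) ∧
        Real.log (NM V G (Real.sqrt ε)) ≤
          (1 + 3 * Real.sqrt ε) * (n : ℝ) * Real.log (p * n) := by
  intro ε p hε hεp hp1
  have hε1 : ε < 1 := hεp.trans_le hp1
  rcases le_or_gt p 0 with hp | hp
  · have hεX {n : ℕ} : ε * n ≤ n := mul_le_of_le_one_left n.cast_nonneg hε1.le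
    exact ⟨0, fun V _ _ G _ X Y n _ _ _ _ _ _ hreg => absurd (pos_of_abs_sub_le_of_lt_sq
      (by exact_mod_cast G.edgeDensity_nonneg X Y) (hreg X subset_rfl Y subset_rfl hεX hεX)
      hεp hε1) hp.not_gt⟩
  set q := √ε
  have hεq : ε < q := (lt_sqrt hε.le).2 (by nlinarith)
  have hqp : q < p := by simpa only [sqrt_sq hp.le] using sqrt_lt_sqrt hε.le hεp
  have hp1' : p ≤ 1 := by nlinarith
  obtain ⟨N, hN⟩ := eventually_atTop.1 <| (eventually_mul_log_le_mul_log hε hεq hqp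
    hp1').and (eventually_mul_log_succ_le hp (by positivity : 0 < 3 * q))
  refine ⟨2 * N, fun V _ _ G _ X Y n hn hX hY hXY hcover hadj hreg => ?_⟩
  obtain ⟨hlower, hupper⟩ := hN n (by omega)
  set t := ⌈(1 - q) * n⌉₊
  have ht : (1 - q) * n ≤ t := Nat.le_ceil _
  obtain ⟨hεnt, hlog⟩ := hlower t ht (Nat.ceil_lt_add_one (mul_nonneg (by linarith) n.cast_nonneg))
  have hNM := sub_mul_pow_le_NM_of_regular hX hY hXY hcover hadj hreg hε.le (by linarith) ht hεnt
  have hpos : 0 < ((p - ε) * (n - t)) ^ t := by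
    have : (0 : ℝ) < n - t := hεnt.trans_lt' (mul_pos hε (by exact_mod_cast (by omega : 0 < n)))
    have : 0 < p - ε := by linarith
    positivity
  refine ⟨hlog.trans ?_, (log_NM_le hX hY hadj q).trans hupper⟩
  rw [← log_pow]
  exact log_le_log hpos hNM
end

section
/- Let ε ∈ (0,1), let K ≥ 1 be an integer dividing n, and let G be a graph on n vertices with a partition of V(G) into parts V_1,…,V_K of size n/K each. Classify the pairs e = {i,j} with 1 ≤ i < j ≤ K as follows: E_1 is the set of pairs for which (V_i,V_j) is not ε-regular; among the ε-regular pairs, E_2 are those with d(V_i,V_j) < n^{√ε−1}, E_3 those with n^{√ε−1} ≤ d(V_i,V_j) ≤ n^{−√ε}, and E_4 those with d(V_i,V_j) > n^{−√ε}. For e = {i,j} ∈ E_1 let m_e be the size of a maximum matching in the bipartite graph formed by the edges of G between V_i and V_j and set r_e = K·m_e/n; for i ∈ {1,…,K} let m_i be the size of a maximum matching in G[V_i] and set r_i = 2K·m_i/n. Suppose G contains a matching M such that for every i ∈ {1,…,K} at most √ε·n/K vertices of V_i are not covered by M. Then the function w defined on pairs {i,j} (i ≠ j) by w({i,j}) =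 K·|M ∩ E(G[V_i,V_j])|/n satisfies: 0 ≤ w(e) ≤ 1 for every e ∈ E_2 ∪ E_3 ∪ E_4; 0 ≤ w(e) ≤ r_e for every e ∈ E_1; and ∑_{j ≠ i} w({i,j}) ≥ 1 − r_i − √ε for every i. In particular this system of inequalities has a solution. -/
open Finset

/-- The edge `e` has one endpoint in `A` and one endpoint in `B`. -/
def betweenPred {V : Type*} (A B : Finset V) (e : Sym2 V) : Prop :=
  ∃ u v : V, u ∈ A ∧ v ∈ B ∧ e = s(u, v)

/-- Both endpoints of the edge `e` lie in `A`. -/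
def withinPred {V : Type*} (A : Finset V) (e : Sym2 V) : Prop := ∀ v ∈ e, v ∈ A

/-- The size of a maximum matching of `G` using only edges satisfying `P`. -/
noncomputable def maxMatchingSize {V : Type*} (G : SimpleGraph V) (P : Sym2 V → Prop) : ℕ :=
  sSup {k : ℕ | ∃ M : Finset (Sym2 V), IsMatchingFinset G M ∧ (∀ e ∈ M, P e) ∧ M.card = k}

/-- The pair `(A,B)` is `ε`-regular in `G`: all subpairs `(A',B')` with `|A'| ≥ ε|A|` and
`|B'| ≥ ε|B|` satisfy `|d(A',B') - d(A,B)| < ε`. -/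
def IsRegularPair {V : Type*} [Fintype V] [DecidableEq V]
    (G : SimpleGraph V) [DecidableRel G.Adj] (ε : ℝ) (A B : Finset V) : Prop :=
  ∀ A' ⊆ A, ∀ B' ⊆ B,
    ε * (A.card : ℝ) ≤ (A'.card : ℝ) → ε * (B.card : ℝ) ≤ (B'.card : ℝ) →
    |((G.edgeDensity A' B' : ℚ) : ℝ) - ((G.edgeDensity A B : ℚ) : ℝ)| < ε


section Aux

open Classical in
/-- Any matching whose edges all satisfy `P` has size at most `maxMatchingSize G P`. -/
lemma aux_card_le_maxMatchingSize {V : Type*} [Fintype V] [DecidableEq V]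
    (G : SimpleGraph V) (P : Sym2 V → Prop) (M : Finset (Sym2 V))
    (hM : IsMatchingFinset G M) (hP : ∀ e ∈ M, P e) :
    M.card ≤ maxMatchingSize G P := by
  apply le_csSup
  · refine ⟨Fintype.card (Sym2 V), ?_⟩
    rintro k ⟨N, -, -, rfl⟩
    exact le_trans N.card_le_univ (le_of_eq (Finset.card_univ))
  · exact ⟨M, hM, hP, rfl⟩

lemma aux_filter_card_le_two {V : Type*} [DecidableEq V] (A : Finset V) (e : Sym2 V) :
    (A.filter (· ∈ e)).card ≤ 2 := by
  induction e using Sym2.ind with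
  | _ a b =>
    have h : A.filter (· ∈ s(a, b)) ⊆ {a, b} := by
      intro x hx
      simp only [Finset.mem_filter, Sym2.mem_iff] at hx
      simp [hx.2]
    exact le_trans (Finset.card_le_card h)
      (le_trans (Finset.card_insert_le a {b}) (by simp))

end Aux

/-- If `M` is a matching of `G` missing at most `√ε·n/K` vertices of each part
`Vᵢ` of an equitable partition, then `w({i,j}) = K·|M ∩ E(G[Vᵢ,Vⱼ])|/n` is a feasible solution:
`0 ≤ w(e) ≤ 1` for `ε`-regular pairs (`E₂ ∪ E₃ ∪ E₄`), `0 ≤ w(e) ≤ r_e` for irregular pairs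
(`E₁`), and `∑_{j ≠ i} w({i,j}) ≥ 1 - rᵢ - √ε` for every `i`. In particular the system of
inequalities has a solution. -/

theorem near_perfect_matching_gives_feasible_solution
    (ε : ℝ) (hε : 0 < ε) (hε1 : ε < 1)
    (K n : ℕ) (hK : 1 ≤ K) (hn : 0 < n) (hKn : K ∣ n)
    {V : Type*} [Fintype V] [DecidableEq V]
    (G : SimpleGraph V) [DecidableRel G.Adj] (Vp : Fin K → Finset V)
    (hcardV : Fintype.card V = n)
    (hsize : ∀ i, (Vp i).card = n / K)
    (hdisj : ∀ i j, i ≠ j → Disjoint (Vp i) (Vp j))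
    (hcover : ∀ v : V, ∃ i, v ∈ Vp i)
    (M : Finset (Sym2 V)) (hM : IsMatchingFinset G M)
    (hMnear : ∀ i, ({v : V | v ∈ Vp i ∧ ¬ ∃ e ∈ M, v ∈ e}.ncard : ℝ) ≤
      Real.sqrt ε * (n : ℝ) / (K : ℝ))
    (w : Fin K → Fin K → ℝ)
    (hw : ∀ i j, w i j =
      (K : ℝ) * ({e : Sym2 V | e ∈ M ∧ betweenPred (Vp i) (Vp j) e}.ncard : ℝ) / (n : ℝ)) :
    (∀ i j, i ≠ j → IsRegularPair G ε (Vp i) (Vp j) → 0 ≤ w i j ∧ w i j ≤ 1) ∧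
    (∀ i j, i ≠ j → ¬ IsRegularPair G ε (Vp i) (Vp j) →
      0 ≤ w i j ∧
        w i j ≤ (K : ℝ) * (maxMatchingSize G (betweenPred (Vp i) (Vp j)) : ℝ) / (n : ℝ)) ∧
    (∀ i, 1 - 2 * (K : ℝ) * (maxMatchingSize G (withinPred (Vp i)) : ℝ) / (n : ℝ) -
      Real.sqrt ε ≤ ∑ j ∈ Finset.univ.erase i, w i j) := by
  classical
  -- basic numerics
  obtain ⟨q, hq⟩ := hKn
  have hK0 : (K : ℝ) ≠ 0 := by positivity
  have hq0 : 0 < q := by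
    rcases Nat.eq_zero_or_pos q with h | h
    · subst h; omega
    · exact h
  have hqR : (0 : ℝ) < q := by exact_mod_cast hq0
  have hnR : (0 : ℝ) < n := by exact_mod_cast hn
  have hqcast : (n : ℝ) = (K : ℝ) * (q : ℝ) := by exact_mod_cast congrArg Nat.cast hq
  have hsize' : ∀ i, (Vp i).card = q := by
    intro i; rw [hsize i, hq, Nat.mul_div_cancel_left _ (by omega)]
  -- w in terms of finset cards
  have hwc : ∀ i j, w i j =
      (K : ℝ) * ((M.filter (fun e => betweenPred (Vp i) (Vp j) e)).card : ℝ) / (n : ℝ) := by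
    intro i j
    have hnc : {e : Sym2 V | e ∈ M ∧ betweenPred (Vp i) (Vp j) e}.ncard =
        (M.filter (fun e => betweenPred (Vp i) (Vp j) e)).card := by
      rw [← Set.ncard_coe_finset]
      congr 1
      ext e; simp
    rw [hw i j, hnc]
  -- fibers of vertices over edges
  have hdisjt : ∀ i : Fin K, ∀ e ∈ M, ∀ f ∈ M, e ≠ f →
      Disjoint ((Vp i).filter (· ∈ e)) ((Vp i).filter (· ∈ f)) := by
    intro i e he f hf hef
    rw [Finset.disjoint_left]
    intro v hv hv'
    simp only [Finset.mem_filter] at hv hv'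
    exact hM.2 e he f hf hef v ⟨hv.2, hv'.2⟩
  have hsumle : ∀ i : Fin K, ∑ e ∈ M, ((Vp i).filter (· ∈ e)).card ≤ q := by
    intro i
    rw [← Finset.card_biUnion (fun e he f hf hef => hdisjt i e he f hf hef)]
    calc (M.biUnion fun e => (Vp i).filter (· ∈ e)).card
        ≤ (Vp i).card := Finset.card_le_card
          (Finset.biUnion_subset.mpr fun e _ => Finset.filter_subset _ _)
      _ = q := hsize' i
  -- each between-edge contains a vertex of Vp i
  have hfib1 : ∀ i j : Fin K, ∀ e, betweenPred (Vp i) (Vp j) e →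
      1 ≤ ((Vp i).filter (· ∈ e)).card := by
    rintro i j e ⟨u, v, hu, hv, rfl⟩
    exact Finset.card_pos.mpr ⟨u, Finset.mem_filter.mpr ⟨hu, by simp⟩⟩
  -- the between-count is at most q
  have hble : ∀ i j : Fin K,
      (M.filter (fun e => betweenPred (Vp i) (Vp j) e)).card ≤ q := by
    intro i j
    calc (M.filter (fun e => betweenPred (Vp i) (Vp j) e)).card
        = ∑ _e ∈ M.filter (fun e => betweenPred (Vp i) (Vp j) e), 1 := by
          simp
      _ ≤ ∑ e ∈ M.filter (fun e => betweenPred (Vp i) (Vp j) e),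
            ((Vp i).filter (· ∈ e)).card := by
          refine Finset.sum_le_sum fun e he => ?_
          exact hfib1 i j e (Finset.mem_filter.mp he).2
      _ ≤ ∑ e ∈ M, ((Vp i).filter (· ∈ e)).card :=
          Finset.sum_le_sum_of_subset (Finset.filter_subset _ _)
      _ ≤ q := hsumle i
  refine ⟨?_, ?_, ?_⟩
  · -- regular pairs
    intro i j _ _
    constructor
    · rw [hw]; positivity
    · rw [hwc, hqcast, div_le_one (by positivity)]
      have := hble i j
      have : ((M.filter (fun e => betweenPred (Vp i) (Vp j) e)).card : ℝ) ≤ (q : ℝ) := by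
        exact_mod_cast this
      have hK1 : (1 : ℝ) ≤ (K : ℝ) := by exact_mod_cast hK
      nlinarith
  · -- irregular pairs
    intro i j _ _
    constructor
    · rw [hw]; positivity
    · rw [hwc]
      have hle : (M.filter (fun e => betweenPred (Vp i) (Vp j) e)).card
          ≤ maxMatchingSize G (betweenPred (Vp i) (Vp j)) := by
        refine aux_card_le_maxMatchingSize G _ _ ?_ ?_
        · exact ⟨fun e he => hM.1 e (Finset.mem_of_mem_filter e he),
            fun e he f hf => hM.2 e (Finset.mem_of_mem_filter e he) f
              (Finset.mem_of_mem_filter f hf)⟩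
        · exact fun e he => (Finset.mem_filter.mp he).2
      gcongr
  · -- row sums
    intro i
    set mc : ℕ := (M.filter (fun e => withinPred (Vp i) e)).card with hmc
    set mm : ℕ := maxMatchingSize G (withinPred (Vp i)) with hmmdef
    set Cov : Finset V := (Vp i).filter (fun v => ∃ e ∈ M, v ∈ e) with hCov
    set S : ℕ := ∑ j ∈ Finset.univ.erase i,
      (M.filter (fun e => betweenPred (Vp i) (Vp j) e)).card with hS
    -- covered vertices are at most the fiber sum
    have hCovle : Cov.card ≤ ∑ e ∈ M, ((Vp i).filter (· ∈ e)).card := by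
      rw [← Finset.card_biUnion (fun e he f hf hef => hdisjt i e he f hf hef)]
      refine Finset.card_le_card ?_
      intro v hv
      simp only [hCov, Finset.mem_filter] at hv
      obtain ⟨hvi, e, he, hve⟩ := hv
      exact Finset.mem_biUnion.mpr ⟨e, he, Finset.mem_filter.mpr ⟨hvi, hve⟩⟩
    -- key pointwise bound for non-within edges
    have key : ∀ e ∈ M, ¬ withinPred (Vp i) e →
        ((Vp i).filter (· ∈ e)).card ≤
          ((Finset.univ.erase i).filter
            (fun j => betweenPred (Vp i) (Vp j) e)).card := by
      intro e
      induction e using Sym2.ind with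
      | _ a b =>
        intro _ hnw
        by_cases ha : a ∈ Vp i <;> by_cases hb : b ∈ Vp i
        · exact absurd (fun v hv => by
            rcases Sym2.mem_iff.mp hv with rfl | rfl <;> assumption) hnw
        · have hfa : (Vp i).filter (· ∈ s(a, b)) = {a} := by
            ext x
            simp only [Finset.mem_filter, Sym2.mem_iff, Finset.mem_singleton]
            constructor
            · rintro ⟨hx, rfl | rfl⟩
              · rfl
              · exact absurd hx hb
            · rintro rfl; exact ⟨ha, Or.inl rfl⟩
          rw [hfa, Finset.card_singleton]
          obtain ⟨j, hj⟩ := hcover b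
          have hji : j ≠ i := fun h => hb (h ▸ hj)
          exact Finset.card_pos.mpr ⟨j, Finset.mem_filter.mpr
            ⟨Finset.mem_erase.mpr ⟨hji, Finset.mem_univ _⟩, a, b, ha, hj, rfl⟩⟩
        · have hfa : (Vp i).filter (· ∈ s(a, b)) = {b} := by
            ext x
            simp only [Finset.mem_filter, Sym2.mem_iff, Finset.mem_singleton]
            constructor
            · rintro ⟨hx, rfl | rfl⟩
              · exact absurd hx ha
              · rfl
            · rintro rfl; exact ⟨hb, Or.inr rfl⟩
          rw [hfa, Finset.card_singleton]
          obtain ⟨j, hj⟩ := hcover a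
          have hji : j ≠ i := fun h => ha (h ▸ hj)
          exact Finset.card_pos.mpr ⟨j, Finset.mem_filter.mpr
            ⟨Finset.mem_erase.mpr ⟨hji, Finset.mem_univ _⟩, b, a, hb, hj, Sym2.eq_swap⟩⟩
        · have hfa : (Vp i).filter (· ∈ s(a, b)) = ∅ := by
            ext x
            simp only [Finset.mem_filter, Sym2.mem_iff, Finset.notMem_empty, iff_false,
              not_and]
            rintro hx (rfl | rfl) <;> [exact ha hx; exact hb hx]
          rw [hfa]
          simp
    -- split the fiber sum
    have hsplit : ∑ e ∈ M, ((Vp i).filter (· ∈ e)).card ≤ 2 * mc + S := by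
      rw [← Finset.sum_filter_add_sum_filter_not M (fun e => withinPred (Vp i) e)]
      refine Nat.add_le_add ?_ ?_
      · calc ∑ e ∈ M.filter (fun e => withinPred (Vp i) e), ((Vp i).filter (· ∈ e)).card
            ≤ ∑ _e ∈ M.filter (fun e => withinPred (Vp i) e), 2 :=
              Finset.sum_le_sum fun e _ => aux_filter_card_le_two _ _
          _ = 2 * mc := by rw [Finset.sum_const, smul_eq_mul, mul_comm, hmc]
      · calc ∑ e ∈ M.filter (fun e => ¬ withinPred (Vp i) e), ((Vp i).filter (· ∈ e)).card
            ≤ ∑ e ∈ M.filter (fun e => ¬ withinPred (Vp i) e),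
                ((Finset.univ.erase i).filter
                  (fun j => betweenPred (Vp i) (Vp j) e)).card := by
              refine Finset.sum_le_sum fun e he => ?_
              obtain ⟨heM, hnw⟩ := Finset.mem_filter.mp he
              exact key e heM hnw
          _ ≤ ∑ e ∈ M, ((Finset.univ.erase i).filter
                (fun j => betweenPred (Vp i) (Vp j) e)).card :=
              Finset.sum_le_sum_of_subset (Finset.filter_subset _ _)
          _ = S := by
              simp only [Finset.card_filter, hS]
              rw [Finset.sum_comm]
    -- lower bound on covered vertices
    have hCovlb : (q : ℝ) - Real.sqrt ε * q ≤ (Cov.card : ℝ) := by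
      have hsplitV := Finset.card_filter_add_card_filter_not
        (s := Vp i) (p := fun v => ∃ e ∈ M, v ∈ e)
      have huncset : {v : V | v ∈ Vp i ∧ ¬ ∃ e ∈ M, v ∈ e} =
          ↑((Vp i).filter (fun v => ¬ ∃ e ∈ M, v ∈ e)) := by
        ext v; simp
      have hnear := hMnear i
      rw [huncset, Set.ncard_coe_finset] at hnear
      have hsq : Real.sqrt ε * (n : ℝ) / (K : ℝ) = Real.sqrt ε * q := by
        rw [hqcast]; field_simp
      rw [hsq] at hnear
      have hcards : (Cov.card : ℝ) +
          (((Vp i).filter (fun v => ¬ ∃ e ∈ M, v ∈ e)).card : ℝ) = (q : ℝ) := by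
        rw [hCov]
        exact_mod_cast (hsplitV.trans (hsize' i))
      linarith
    -- cast facts
    have hmmle : (mc : ℝ) ≤ (mm : ℝ) := by
      have : mc ≤ mm := by
        refine aux_card_le_maxMatchingSize G _ _ ?_ ?_
        · exact ⟨fun e he => hM.1 e (Finset.mem_of_mem_filter e he),
            fun e he f hf => hM.2 e (Finset.mem_of_mem_filter e he) f
              (Finset.mem_of_mem_filter f hf)⟩
        · exact fun e he => (Finset.mem_filter.mp he).2
      exact_mod_cast this
    have hcnt : (Cov.card : ℝ) ≤ 2 * (mc : ℝ) + (S : ℝ) := by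
      exact_mod_cast le_trans hCovle hsplit
    have hsw : ∑ j ∈ Finset.univ.erase i, w i j = (K : ℝ) * (S : ℝ) / (n : ℝ) := by
      rw [hS]
      push_cast
      rw [Finset.mul_sum, Finset.sum_div]
      exact Finset.sum_congr rfl fun j _ => hwc i j
    rw [hsw]
    have h1 : (1 - Real.sqrt ε) * (q : ℝ) - 2 * (mm : ℝ) ≤ (S : ℝ) := by nlinarith
    calc 1 - 2 * (K : ℝ) * (mm : ℝ) / (n : ℝ) - Real.sqrt ε
        = ((1 - Real.sqrt ε) * (q : ℝ) - 2 * (mm : ℝ)) / (q : ℝ) := by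
          rw [hqcast]; field_simp; ring
      _ ≤ (S : ℝ) / (q : ℝ) := by gcongr
      _ = (K : ℝ) * (S : ℝ) / (n : ℝ) := by
          rw [hqcast, mul_div_mul_left _ _ hK0]
end

section
/- Let ε and p be reals with 0 < ε < p² ≤ 1 and set δ = √ε/p (so 0 < δ < 1), c = 1/((1−δ)p), k = 1/√ε − c, and t = log((1−δ)p)/log(1−(1−δ)p). Suppose k and t are positive integers. Then there exists n₀ = n₀(ε,p) such that for every real n > n₀: ∑_{i=0}^{k−1} [ log Γ((1−δ)p·n(1−i√ε) + 1) − log Γ((1−δ)p·n(1−i√ε) − √ε·n + 1) ] + ∑_{i=0}^{t−1} log Γ((1−δ)p·c·√ε·n·(1−(1−δ)p)^i + 1) ≥ (1−3√ε)·n·log(pn). -/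
/-!
Write `s = √ε` and `r = (1 - δ)p = p - s`, so that `c = 1/r`, `k s = 1 - s/r` and `(1 - r)^t = r`.
By log-convexity of `Γ`, each term of the first sum is at least `s n log b` where `b ≥ s r n` is the
smaller argument, and the terms of the second sum are `log Γ(x + 1) ≥ x log x - x` with
`x = s n (1 - r)^i ≥ s n r` and total `∑ x = (1/r - 1) s n`. Together the coefficient of
`n log n` becomes `(1 - s/r) + (1/r - 1) s = 1 - s`, beating `1 - 3s` by `2 s n log n`, which
eventually dominates the remaining `O(n)` terms.
-/

open Finset Real Set MeasureTheory Filter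

-- Restrict Euler's integral to `t > x`, where `t ^ x ≥ x ^ x`.
theorem rpow_mul_exp_neg_le_Gamma_add_one {x : ℝ} (hx : 0 < x) :
    x ^ x * exp (-x) ≤ Gamma (x + 1) := by
  have hint : IntegrableOn (fun t : ℝ => exp (-t) * t ^ x) (Ioi 0) := by
    simpa using GammaIntegral_convergent (s := x + 1) (by linarith)
  calc x ^ x * exp (-x) = ∫ t in Ioi x, exp (-t) * x ^ x := by
        rw [integral_mul_const, integral_exp_neg_Ioi, mul_comm]
    _ ≤ ∫ t in Ioi x, exp (-t) * t ^ x :=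
        setIntegral_mono_on ((integrableOn_exp_neg_Ioi x).mul_const _)
          (hint.mono_set (Ioi_subset_Ioi hx.le)) measurableSet_Ioi fun t ht =>
          mul_le_mul_of_nonneg_left (rpow_le_rpow hx.le (le_of_lt ht) hx.le) (exp_pos _).le
    _ ≤ ∫ t in Ioi 0, exp (-t) * t ^ x :=
        setIntegral_mono_set hint
          ((ae_restrict_iff' measurableSet_Ioi).2 (ae_of_all _ fun t ht =>
            mul_nonneg (exp_pos _).le (rpow_nonneg (le_of_lt ht) _)))
          (Ioi_subset_Ioi hx.le).eventuallyLE
    _ = Gamma (x + 1) := by rw [Gamma_eq_integral (by linarith), add_sub_cancel_right]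

theorem mul_log_sub_le_log_Gamma_add_one {x : ℝ} (hx : 0 < x) :
    x * log x - x ≤ log (Gamma (x + 1)) := by
  have h := log_le_log (by positivity) (rpow_mul_exp_neg_le_Gamma_add_one hx)
  rwa [log_mul (by positivity) (exp_pos _).ne', log_rpow hx, log_exp, ← sub_eq_add_neg] at h

-- The slope of `log ∘ Γ` on `[b, b + 1]` is `log b`; by convexity later slopes are larger.
theorem mul_log_le_log_Gamma_add_one_sub {a b : ℝ} (hb : 0 < b) (hba : b ≤ a) :
    (a - b) * log b ≤ log (Gamma (a + 1)) - log (Gamma (b + 1)) := by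
  rcases hba.eq_or_lt with rfl | hlt
  · simp
  have hstep : log (Gamma (b + 1)) - log (Gamma b) = log b := by
    rw [Gamma_add_one hb.ne', log_mul hb.ne' (Gamma_pos_of_pos hb).ne', add_sub_cancel_right]
  have hslope := convexOn_log_Gamma.slope_mono_adjacent (x := b) (y := b + 1) (z := a + 1)
    hb (show 0 < a + 1 by linarith) (by linarith) (by linarith)
  simp only [Function.comp_apply, add_sub_cancel_left, div_one, hstep,
    add_sub_add_right_eq_sub] at hslope
  rwa [le_div_iff₀ (sub_pos.2 hlt), mul_comm] at hslope

theorem mul_log_le_sum_log_Gamma_sub {r s n : ℝ} {k : ℕ} (hr : 0 < r) (hs : 0 < s) (hn : 0 < n)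
    (hk : k * s ≤ 1 - s / r) :
    k * s * n * log (s * n * r) ≤ ∑ i ∈ range k,
      (log (Gamma (r * (n * (1 - i * s)) + 1)) -
        log (Gamma (r * (n * (1 - i * s)) - s * n + 1))) := by
  have hterm : ∀ i ∈ range k, s * n * log (s * n * r) ≤
      log (Gamma (r * (n * (1 - i * s)) + 1)) - log (Gamma (r * (n * (1 - i * s)) - s * n + 1)) := by
    intro i hi
    have hik : ((i : ℝ) + 1) * s ≤ 1 - s / r :=
      le_trans (mul_le_mul_of_nonneg_right (by exact_mod_cast mem_range.1 hi) hs.le) hk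
    have hnr : n * r * (1 - s / r) = n * r - n * s := by field_simp
    have hb : s * n * r ≤ r * (n * (1 - i * s)) - s * n := by
      nlinarith [mul_le_mul_of_nonneg_left hik (mul_pos hn hr).le]
    have hb0 : 0 < s * n * r := by positivity
    calc s * n * log (s * n * r) ≤ s * n * log (r * (n * (1 - i * s)) - s * n) := by
          gcongr
      _ = (r * (n * (1 - i * s)) - (r * (n * (1 - i * s)) - s * n)) *
            log (r * (n * (1 - i * s)) - s * n) := by ring
      _ ≤ _ := mul_log_le_log_Gamma_add_one_sub (hb0.trans_le hb) (sub_le_self _ (by positivity))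
  simpa [mul_assoc] using card_nsmul_le_sum _ _ _ hterm

theorem sum_mul_log_sub_one_le_sum_log_Gamma {ι : Type*} (I : Finset ι) (x : ι → ℝ) {m : ℝ}
    (hm : 0 < m) (hx : ∀ i ∈ I, m ≤ x i) :
    (∑ i ∈ I, x i) * (log m - 1) ≤ ∑ i ∈ I, log (Gamma (x i + 1)) := by
  rw [sum_mul]
  refine sum_le_sum fun i hi => ?_
  have hxi := hm.trans_le (hx i hi)
  calc x i * (log m - 1) ≤ x i * (log (x i) - 1) := by gcongr; exact hx i hi
    _ = x i * log (x i) - x i := by ring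
    _ ≤ _ := mul_log_sub_le_log_Gamma_add_one hxi

theorem mul_log_le_sum_log_Gamma_geom {r a : ℝ} {t : ℕ} (hr0 : 0 < r) (hr1 : r < 1) (ha : 0 < a)
    (ht : (1 - r) ^ t = r) :
    (1 / r - 1) * a * (log (a * r) - 1) ≤ ∑ i ∈ range t, log (Gamma (a * (1 - r) ^ i + 1)) := by
  have hsum : ∑ i ∈ range t, a * (1 - r) ^ i = (1 / r - 1) * a := by
    rw [← mul_sum, geom_sum_eq (by linarith : 1 - r ≠ 1), ht, sub_sub_cancel_left]
    field_simp
    ring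
  rw [← hsum]
  refine sum_mul_log_sub_one_le_sum_log_Gamma _ _ (mul_pos ha hr0) fun i hi => ?_
  calc a * r = a * (1 - r) ^ t := by rw [ht]
    _ ≤ a * (1 - r) ^ i :=
      mul_le_mul_of_nonneg_left
        (pow_le_pow_of_le_one (by linarith) (by linarith) (mem_range.1 hi).le) ha.le

theorem pow_eq_of_natCast_eq_log_div_log {x y : ℝ} {t : ℕ} (hx0 : 0 < x) (hx1 : x ≠ 1)
    (hy : 0 < y) (ht : (t : ℝ) = log y / log x) : x ^ t = y := by
  refine log_injOn_pos (pow_pos hx0 t) hy ?_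
  rw [log_pow, ht, div_mul_cancel₀ _ (log_ne_zero_of_pos_of_ne_one hx0 hx1)]

theorem eventually_mul_log_le {s r p : ℝ} (hs : 0 < s) (hp : 0 < p) (hr : 0 < r) :
    ∀ᶠ n in atTop, 0 < n ∧ (1 - 3 * s) * n * log (p * n) ≤
      (1 - s / r) * n * log (s * n * r) + (1 / r - 1) * (s * n) * (log (s * n * r) - 1) := by
  have hlog : Tendsto (fun n => log (p * n)) atTop atTop :=
    tendsto_log_atTop.comp (tendsto_id.const_mul_atTop hp)
  filter_upwards [eventually_gt_atTop 0,
    hlog.eventually_ge_atTop (((1 / r - 1) * s - (1 - s) * log (s * r / p)) / (2 * s))]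
    with n hn hL
  refine ⟨hn, ?_⟩
  have hsplit : log (s * n * r) = log (s * r / p) + log (p * n) := by
    rw [← log_mul (by positivity) (by positivity)]
    congr 1
    field_simp
  rw [div_le_iff₀ (by positivity)] at hL
  rw [hsplit]
  linear_combination n * hL

theorem near_perfect_matching_count_computation_general
    (ε p : ℝ) (hε : 0 < ε) (hεp : ε < p ^ 2) (hp1 : p ^ 2 ≤ 1) (hp : 0 < p)
    (δ c : ℝ) (hδ : δ = Real.sqrt ε / p) (hc : c = 1 / ((1 - δ) * p))
    (k t : ℕ)
    (hkval : (k : ℝ) = 1 / Real.sqrt ε - c)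
    (htval : (t : ℝ) = Real.log ((1 - δ) * p) / Real.log (1 - (1 - δ) * p)) :
    ∃ n₀ : ℝ, ∀ n : ℝ, n > n₀ →
      (∑ i ∈ Finset.range k,
          (Real.log (Real.Gamma ((1 - δ) * p * (n * (1 - (i : ℝ) * Real.sqrt ε)) + 1)) -
            Real.log (Real.Gamma
              ((1 - δ) * p * (n * (1 - (i : ℝ) * Real.sqrt ε)) - Real.sqrt ε * n + 1)))) +
        (∑ i ∈ Finset.range t,
          Real.log (Real.Gamma
            ((1 - δ) * p * c * Real.sqrt ε * n * (1 - (1 - δ) * p) ^ i + 1))) ≥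
      (1 - 3 * Real.sqrt ε) * n * Real.log (p * n) := by
  set s := √ε
  set r := (1 - δ) * p
  have hs : 0 < s := sqrt_pos.2 hε
  have hsp : s < p := (sqrt_lt' hp).2 hεp
  have hr : r = p - s := by simp only [r, hδ]; field_simp
  have hr0 : 0 < r := by linarith
  have hr1 : r < 1 := by nlinarith
  have hrc : r * c = 1 := by rw [hc, mul_one_div_cancel hr0.ne']
  have hks : (k : ℝ) * s = 1 - s / r := by rw [hkval, hc]; field_simp
  have hqt : (1 - r) ^ t = r :=
    pow_eq_of_natCast_eq_log_div_log (by linarith) (by linarith) hr0 htval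
  obtain ⟨n₀, hn₀⟩ := eventually_atTop.1 (eventually_mul_log_le hs hp hr0)
  refine ⟨n₀, fun n hn => ?_⟩
  obtain ⟨hn0, hgrowth⟩ := hn₀ n hn.le
  rw [hrc, one_mul, ge_iff_le]
  calc (1 - 3 * s) * n * log (p * n)
      ≤ k * s * n * log (s * n * r) + (1 / r - 1) * (s * n) * (log (s * n * r) - 1) := by
        rwa [← hks] at hgrowth
    _ ≤ _ := add_le_add (mul_log_le_sum_log_Gamma_sub hr0 hs hn0 hks.le)
        (mul_log_le_sum_log_Gamma_geom hr0 hr1 (by positivity) hqt)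

/-- Let `0 < ε < p² ≤ 1` (with `p > 0`), `δ = √ε/p`, `c = 1/((1-δ)p)`,
and suppose `k = 1/√ε - c` and `t = log((1-δ)p)/log(1-(1-δ)p)` are positive integers. Then for
all sufficiently large real `n`,
`∑_{i=0}^{k-1} [log Γ((1-δ)p·n(1-i√ε)+1) - log Γ((1-δ)p·n(1-i√ε)-√ε·n+1)]
  + ∑_{i=0}^{t-1} log Γ((1-δ)p·c·√ε·n·(1-(1-δ)p)^i + 1) ≥ (1-3√ε)·n·log(pn)`. -/
theorem near_perfect_matching_count_computation
    (ε p : ℝ) (hε : 0 < ε) (hεp : ε < p ^ 2) (hp1 : p ^ 2 ≤ 1) (hp : 0 < p)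
    (δ c : ℝ) (hδ : δ = Real.sqrt ε / p) (hc : c = 1 / ((1 - δ) * p))
    (k t : ℕ) (hkpos : 0 < k) (htpos : 0 < t)
    (hkval : (k : ℝ) = 1 / Real.sqrt ε - c)
    (htval : (t : ℝ) = Real.log ((1 - δ) * p) / Real.log (1 - (1 - δ) * p)) :
    ∃ n₀ : ℝ, ∀ n : ℝ, n > n₀ →
      (∑ i ∈ Finset.range k,
          (Real.log (Real.Gamma ((1 - δ) * p * (n * (1 - (i : ℝ) * Real.sqrt ε)) + 1)) -
            Real.log (Real.Gamma
              ((1 - δ) * p * (n * (1 - (i : ℝ) * Real.sqrt ε)) - Real.sqrt ε * n + 1)))) +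
        (∑ i ∈ Finset.range t,
          Real.log (Real.Gamma
            ((1 - δ) * p * c * Real.sqrt ε * n * (1 - (1 - δ) * p) ^ i + 1))) ≥
      (1 - 3 * Real.sqrt ε) * n * Real.log (p * n) :=
  near_perfect_matching_count_computation_general ε p hε hεp hp1 hp δ c hδ hc k t hkval htval
end
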